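/- arXiv:1208.3285 — 4 statements merged into one kernel-verified Lean document; each statement's English description precedes it below -/
import Mathlib

section
/- Let R_1,...,R_M : [-1,1] → ℝ be continuous functions, define w_k = ∫_{-1}^{1} R_k(τ) dτ, assume all w_k ≠ 0, and define S_{kj} = (1/w_k) ∫_{-1}^{1} (∫_{-1}^{τ} R_j(s) ds) R_k(τ) dτ. Then for all k, j: w_k S_{kj} + w_j S_{jk} - w_k w_j = 0. -/
/-! Integration by parts against the primitives $F_k(τ) = ∫_{-1}^τ R_k$, which vanish at $-1$ and equal $w_k$ at $1$:
$∫ F_j R_k + ∫ F_k R_j = F_j(1) F_k(1) = w_j w_k$. -/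

open intervalIntegral MeasureTheory Set
open scoped Interval

theorem ContinuousOn.hasDerivAt_primitive {E : Type*} [NormedAddCommGroup E] [NormedSpace ℝ E]
    [CompleteSpace E] {f : ℝ → E} {a b x : ℝ} (hf : ContinuousOn f [[a, b]])
    (hx : x ∈ Ioo (min a b) (max a b)) :
    HasDerivAt (fun t => ∫ s in a..t, f s) (f x) x := by
  have hmem : [[a, b]] ∈ nhds x := Icc_mem_nhds hx.1 hx.2
  exact integral_hasDerivAt_right
    (hf.mono (uIcc_subset_uIcc left_mem_uIcc (Ioo_subset_Icc_self hx))).intervalIntegrable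
    ((hf.mono Ioo_subset_Icc_self).stronglyMeasurableAtFilter isOpen_Ioo x hx)
    (hf.continuousAt hmem)

theorem integral_primitive_mul_add_integral_primitive_mul {f g : ℝ → ℝ} {a b : ℝ}
    (hf : ContinuousOn f [[a, b]]) (hg : ContinuousOn g [[a, b]]) :
    (∫ x in a..b, (∫ s in a..x, g s) * f x) + (∫ x in a..b, (∫ s in a..x, f s) * g x) =
      (∫ x in a..b, f x) * ∫ x in a..b, g x := by
  have hparts := integral_mul_deriv_eq_deriv_mul_of_hasDerivAt
    (continuousOn_primitive_interval hg.integrableOn_uIcc)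
    (continuousOn_primitive_interval hf.integrableOn_uIcc)
    (fun x hx => hg.hasDerivAt_primitive hx) (fun x hx => hf.hasDerivAt_primitive hx)
    hg.intervalIntegrable hf.intervalIntegrable
  simp only [integral_same, mul_zero, sub_zero] at hparts
  simp only [hparts, mul_comm (g _), mul_comm (∫ x in a..b, g x)]
  ring

theorem stmt_2_general (M : ℕ) (R : Fin M → ℝ → ℝ)
    (hR : ∀ k, ContinuousOn (R k) (Set.Icc (-1 : ℝ) 1))
    (w : Fin M → ℝ) (hw : ∀ k, w k = ∫ τ in (-1 : ℝ)..1, R k τ)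
    (hw0 : ∀ k, w k ≠ 0)
    (S : Fin M → Fin M → ℝ)
    (hS : ∀ k j, S k j =
      (∫ τ in (-1 : ℝ)..1, (∫ s in (-1 : ℝ)..τ, R j s) * R k τ) / w k) :
    ∀ k j, w k * S k j + w j * S j k - w k * w j = 0 := by
  intro k j
  have hR' : ∀ k, ContinuousOn (R k) [[-1, 1]] := by
    simpa only [uIcc_of_le (by norm_num : (-1 : ℝ) ≤ 1)] using hR
  rw [hS k j, hS j k, mul_div_cancel₀ _ (hw0 k), mul_div_cancel₀ _ (hw0 j), hw k, hw j,
    integral_primitive_mul_add_integral_primitive_mul (hR' k) (hR' j), sub_self]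

theorem stmt_2 (M : ℕ) (hM : 1 ≤ M) (R : Fin M → ℝ → ℝ)
    (hR : ∀ k, ContinuousOn (R k) (Set.Icc (-1 : ℝ) 1))
    (w : Fin M → ℝ) (hw : ∀ k, w k = ∫ τ in (-1 : ℝ)..1, R k τ)
    (hw0 : ∀ k, w k ≠ 0)
    (S : Fin M → Fin M → ℝ)
    (hS : ∀ k j, S k j =
      (∫ τ in (-1 : ℝ)..1, (∫ s in (-1 : ℝ)..τ, R j s) * R k τ) / w k) :
    ∀ k j, w k * S k j + w j * S j k - w k * w j = 0 :=
  stmt_2_general M R hR w hw hw0 S hS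
end

section
/- Let c > 0 and let ψ_j, ψ_{j'} : [-1,1] → ℂ be continuous eigenfunctions of the operator (F_c ψ)(x) = ∫_{-1}^{1} e^{icxy} ψ(y) dy with nonzero eigenvalues λ_j, λ_{j'}. Define Φ_j(x) = ∫_{-1}^{x} ψ_j(s) ds and I_{jj'} = ∫_{-1}^{1} Φ_j(x) ψ_{j'}(x) dx. Then I_{jj'} + I_{j'j} = λ_j λ_{j'} ψ_j(0) ψ_{j'}(0). -/
noncomputable def clampF (ψ : ℝ → ℂ) : ℝ → ℂ := fun x => ψ (max (-1) (min 1 x))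

lemma clamp_mem (x : ℝ) : max (-1:ℝ) (min 1 x) ∈ Set.Icc (-1:ℝ) 1 :=
  ⟨le_max_left _ _, max_le (by norm_num) (min_le_left _ _)⟩

lemma clampF_cont {ψ : ℝ → ℂ} (h : ContinuousOn ψ (Set.Icc (-1:ℝ) 1)) : Continuous (clampF ψ) :=
  h.comp_continuous (continuous_const.max (continuous_const.min continuous_id)) clamp_mem

lemma clampF_eq (ψ : ℝ → ℂ) {x : ℝ} (hx : x ∈ Set.Icc (-1:ℝ) 1) : clampF ψ x = ψ x := by
  unfold clampF
  rw [min_eq_right hx.2, max_eq_right hx.1]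

lemma uIcc_sub {x : ℝ} (hx : x ∈ Set.Icc (-1:ℝ) 1) :
    Set.uIcc (-1:ℝ) x ⊆ Set.Icc (-1:ℝ) 1 := by
  rw [Set.uIcc_of_le hx.1]
  exact Set.Icc_subset_Icc le_rfl hx.2

theorem stmt_5 (c : ℝ) (hc : 0 < c) (ψj ψj' : ℝ → ℂ) (lamj lamj' : ℂ)
    (hlamj : lamj ≠ 0) (hlamj' : lamj' ≠ 0)
    (hcj : ContinuousOn ψj (Set.Icc (-1 : ℝ) 1))
    (hcj' : ContinuousOn ψj' (Set.Icc (-1 : ℝ) 1))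
    (heigj : ∀ x ∈ Set.Icc (-1 : ℝ) 1,
      (∫ y in (-1 : ℝ)..1, Complex.exp (Complex.I * c * x * y) * ψj y) = lamj * ψj x)
    (heigj' : ∀ x ∈ Set.Icc (-1 : ℝ) 1,
      (∫ y in (-1 : ℝ)..1, Complex.exp (Complex.I * c * x * y) * ψj' y) = lamj' * ψj' x)
    (Φj Φj' : ℝ → ℂ)
    (hΦj : ∀ x, Φj x = ∫ s in (-1 : ℝ)..x, ψj s)
    (hΦj' : ∀ x, Φj' x = ∫ s in (-1 : ℝ)..x, ψj' s)
    (Ijj' Ij'j : ℂ)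
    (hI : Ijj' = ∫ x in (-1 : ℝ)..1, Φj x * ψj' x)
    (hI' : Ij'j = ∫ x in (-1 : ℝ)..1, Φj' x * ψj x) :
    Ijj' + Ij'j = lamj * lamj' * ψj 0 * ψj' 0 := by
  set g := clampF ψj with hg
  set g' := clampF ψj' with hg'
  have cg : Continuous g := clampF_cont hcj
  have cg' : Continuous g' := clampF_cont hcj'
  set G : ℝ → ℂ := fun x => ∫ s in (-1:ℝ)..x, g s with hG
  set G' : ℝ → ℂ := fun x => ∫ s in (-1:ℝ)..x, g' s with hG'
  have hcongr : ∀ x ∈ Set.Icc (-1:ℝ) 1, Φj x = G x := fun x hx => by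
    rw [hΦj]
    exact intervalIntegral.integral_congr fun s hs => (clampF_eq ψj (uIcc_sub hx hs)).symm
  have hcongr' : ∀ x ∈ Set.Icc (-1:ℝ) 1, Φj' x = G' x := fun x hx => by
    rw [hΦj']
    exact intervalIntegral.integral_congr fun s hs => (clampF_eq ψj' (uIcc_sub hx hs)).symm
  have hdG : ∀ x : ℝ, HasDerivAt G (g x) x := fun x =>
    intervalIntegral.integral_hasDerivAt_right (cg.intervalIntegrable _ _)
      (cg.stronglyMeasurable.stronglyMeasurableAtFilter) cg.continuousAt
  have hdG' : ∀ x : ℝ, HasDerivAt G' (g' x) x := fun x =>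
    intervalIntegral.integral_hasDerivAt_right (cg'.intervalIntegrable _ _)
      (cg'.stronglyMeasurable.stronglyMeasurableAtFilter) cg'.continuousAt
  have hparts := intervalIntegral.integral_mul_deriv_eq_deriv_mul
      (u := G) (v := G') (u' := g) (v' := g') (a := (-1:ℝ)) (b := 1)
      (fun x _ => hdG x) (fun x _ => hdG' x)
      (cg.intervalIntegrable _ _) (cg'.intervalIntegrable _ _)
  have hGneg : G (-1) = 0 := intervalIntegral.integral_same
  have h01 : (0:ℝ) ∈ Set.Icc (-1:ℝ) 1 := by norm_num
  have hone : ∀ ψ : ℝ → ℂ, (∫ y in (-1:ℝ)..1, Complex.exp (Complex.I * c * (0:ℝ) * y) * ψ y)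
      = ∫ y in (-1:ℝ)..1, ψ y := by
    intro ψ
    apply intervalIntegral.integral_congr
    intro y _
    norm_num
  have hG1 : G 1 = lamj * ψj 0 := by
    have h1 : G 1 = ∫ y in (-1:ℝ)..1, ψj y :=
      intervalIntegral.integral_congr fun s hs =>
        clampF_eq ψj (uIcc_sub (by norm_num) hs)
    rw [h1, ← hone ψj, heigj 0 h01]
  have hG'1 : G' 1 = lamj' * ψj' 0 := by
    have h1 : G' 1 = ∫ y in (-1:ℝ)..1, ψj' y :=
      intervalIntegral.integral_congr fun s hs =>
        clampF_eq ψj' (uIcc_sub (by norm_num) hs)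
    rw [h1, ← hone ψj', heigj' 0 h01]
  have hIeq : Ijj' = ∫ x in (-1:ℝ)..1, G x * g' x := by
    rw [hI]
    apply intervalIntegral.integral_congr
    intro x hx
    have hx' : x ∈ Set.Icc (-1:ℝ) 1 := by
      rw [Set.uIcc_of_le (by norm_num : (-1:ℝ) ≤ 1)] at hx; exact hx
    show Φj x * ψj' x = G x * g' x
    rw [hcongr x hx', hg', clampF_eq ψj' hx']
  have hI'eq : Ij'j = ∫ x in (-1:ℝ)..1, g x * G' x := by
    rw [hI']
    apply intervalIntegral.integral_congr
    intro x hx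
    have hx' : x ∈ Set.Icc (-1:ℝ) 1 := by
      rw [Set.uIcc_of_le (by norm_num : (-1:ℝ) ≤ 1)] at hx; exact hx
    show Φj' x * ψj x = g x * G' x
    rw [hcongr' x hx', hg, clampF_eq ψj hx', mul_comm]
  rw [hIeq, hI'eq]
  rw [hparts, hGneg, hG1, hG'1]
  ring
end

section
/- Let c > 0, and let ψ_j, ψ_{j'} : [-1,1] → ℂ be continuous eigenfunctions of (F_c ψ)(x) = ∫_{-1}^{1} e^{icxy} ψ(y) dy with eigenvalues λ_j ≠ 0 and λ_{j'}, where ψ_{j'} is odd (so ψ_{j'}(0) = 0) and y ↦ ψ_{j'}(y)/y extends continuously to [-1,1]. Then with Φ_j(x) = ∫_{-1}^{x} ψ_j(s) ds, ∫_{-1}^{1} Φ_j(x) ψ_{j'}(x) dx = (λ_{j'}/(ic λ_j)) ∫_{-1}^{1} ψ_j(y) (ψ_{j'}(y)/y) dy. -/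
open MeasureTheory Set intervalIntegral Complex

private lemma swap_int (a b a' b' : ℝ) (hab : a ≤ b) (hab' : a' ≤ b') (F : ℝ → ℝ → ℂ)
    (hF : ContinuousOn (fun p : ℝ × ℝ => F p.1 p.2) (Set.Icc a b ×ˢ Set.Icc a' b')) :
    (∫ x in a..b, ∫ y in a'..b', F x y) = ∫ y in a'..b', ∫ x in a..b, F x y := by
  have hInt : Integrable (Function.uncurry F)
      ((volume.restrict (Set.Ioc a b)).prod (volume.restrict (Set.Ioc a' b'))) := by
    rw [Measure.prod_restrict]
    have h1 : IntegrableOn (Function.uncurry F) (Set.Icc a b ×ˢ Set.Icc a' b') volume :=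
      hF.integrableOn_compact (isCompact_Icc.prod isCompact_Icc)
    rw [Measure.volume_eq_prod] at h1
    exact h1.mono_set (Set.prod_mono Set.Ioc_subset_Icc_self Set.Ioc_subset_Icc_self)
  rw [intervalIntegral.integral_of_le hab, intervalIntegral.integral_of_le hab']
  simp_rw [intervalIntegral.integral_of_le hab', intervalIntegral.integral_of_le hab]
  exact MeasureTheory.integral_integral_swap hInt

theorem stmt_8 (c : ℝ) (hc : 0 < c) (ψj ψj' : ℝ → ℂ) (lamj lamj' : ℂ)
    (hlamj : lamj ≠ 0)
    (hcj : ContinuousOn ψj (Set.Icc (-1 : ℝ) 1))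
    (hcj' : ContinuousOn ψj' (Set.Icc (-1 : ℝ) 1))
    (heigj : ∀ x ∈ Set.Icc (-1 : ℝ) 1,
      (∫ y in (-1 : ℝ)..1, Complex.exp (Complex.I * c * x * y) * ψj y) = lamj * ψj x)
    (heigj' : ∀ x ∈ Set.Icc (-1 : ℝ) 1,
      (∫ y in (-1 : ℝ)..1, Complex.exp (Complex.I * c * x * y) * ψj' y) = lamj' * ψj' x)
    (hodd : ∀ y, ψj' (-y) = - ψj' y)
    (g : ℝ → ℂ) (hg : ContinuousOn g (Set.Icc (-1 : ℝ) 1))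
    (hgy : ∀ y ∈ Set.Icc (-1 : ℝ) 1, y ≠ 0 → g y = ψj' y / y)
    (Φj : ℝ → ℂ) (hΦj : ∀ x, Φj x = ∫ s in (-1 : ℝ)..x, ψj s) :
    (∫ x in (-1 : ℝ)..1, Φj x * ψj' x)
      = (lamj' / (Complex.I * c * lamj)) * ∫ y in (-1 : ℝ)..1, ψj y * g y := by
  have hc0 : (c : ℂ) ≠ 0 := by exact_mod_cast hc.ne'
  have hIc : Complex.I * c ≠ 0 := mul_ne_zero Complex.I_ne_zero hc0
  set H : ℝ → ℝ → ℂ := fun y x => ∫ s in (-1:ℝ)..x, Complex.exp (Complex.I * c * s * y) with hH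
  -- joint continuity of H
  have hHc : Continuous (fun p : ℝ × ℝ => H p.1 p.2) := by
    apply intervalIntegral.continuous_parametric_intervalIntegral_of_continuous
      (f := fun (p : ℝ × ℝ) (t : ℝ) => Complex.exp (Complex.I * c * t * p.1))
      (s := fun p : ℝ × ℝ => p.2)
    · exact Complex.continuous_exp.comp (by fun_prop)
    · exact continuous_snd
  -- integral of odd function vanishes
  have hodd0 : (∫ x in (-1:ℝ)..1, ψj' x) = 0 := by
    have h := intervalIntegral.integral_comp_neg (a := (-1:ℝ)) (b := 1) (f := ψj')
    simp only [hodd, intervalIntegral.integral_neg, neg_neg] at h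
    linear_combination (-1/2 : ℂ) * h
  -- step A
  have hA : ∀ x ∈ Set.Icc (-1:ℝ) 1, Φj x = lamj⁻¹ * ∫ y in (-1:ℝ)..1, H y x * ψj y := by
    intro x hx
    obtain ⟨hx1, hx2⟩ := hx
    rw [hΦj]
    have h1 : Set.EqOn ψj
        (fun s => lamj⁻¹ * ∫ y in (-1:ℝ)..1, Complex.exp (Complex.I * c * s * y) * ψj y)
        (Set.uIcc (-1:ℝ) x) := by
      intro s hs
      rw [Set.uIcc_of_le hx1] at hs
      have hs' : s ∈ Set.Icc (-1:ℝ) 1 := ⟨hs.1, hs.2.trans hx2⟩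
      simp only
      rw [heigj s hs', ← mul_assoc, inv_mul_cancel₀ hlamj, one_mul]
    rw [intervalIntegral.integral_congr h1, intervalIntegral.integral_const_mul]
    congr 1
    have hcont : ContinuousOn
        (fun p : ℝ × ℝ => Complex.exp (Complex.I * c * p.1 * p.2) * ψj p.2)
        (Set.Icc (-1:ℝ) x ×ˢ Set.Icc (-1:ℝ) 1) :=
      (Complex.continuous_exp.comp (by fun_prop)).continuousOn.mul
        (hcj.comp continuous_snd.continuousOn (fun p hp => hp.2))
    rw [swap_int (-1) x (-1) 1 hx1 (by norm_num) _ hcont]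
    apply intervalIntegral.integral_congr
    intro y _
    simp only
    rw [intervalIntegral.integral_mul_const]
  -- step C
  have hC : ∀ y ∈ Set.Icc (-1:ℝ) 1, y ≠ 0 →
      (∫ x in (-1:ℝ)..1, H y x * ψj' x) = lamj' * ψj' y / (Complex.I * c * y) := by
    intro y hy hy0
    have hy0' : (y : ℂ) ≠ 0 := by exact_mod_cast hy0
    have hicy : Complex.I * c * y ≠ 0 := mul_ne_zero hIc hy0'
    have hHy : ∀ x : ℝ, H y x =
        (Complex.exp ((Complex.I * c * y) * x) - Complex.exp ((Complex.I * c * y) * (-1)))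
          / (Complex.I * c * y) := by
      intro x
      have h2 : H y x = ∫ s in (-1:ℝ)..x, Complex.exp ((Complex.I * c * y) * s) := by
        apply intervalIntegral.integral_congr
        intro s _
        ring_nf
      rw [h2, integral_exp_mul_complex hicy]
      norm_num
    have hψint : ContinuousOn ψj' (Set.uIcc (-1:ℝ) 1) := by
      rwa [Set.uIcc_of_le (by norm_num : (-1:ℝ) ≤ 1)]
    have e1 : Set.EqOn (fun x => H y x * ψj' x)
        (fun x => (Complex.I * c * y)⁻¹ * (Complex.exp ((Complex.I * c * y) * x) * ψj' x)
          - ((Complex.I * c * y)⁻¹ * Complex.exp ((Complex.I * c * y) * (-1))) * ψj' x)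
        (Set.uIcc (-1:ℝ) 1) := by
      intro x _
      simp only
      rw [hHy x]
      field_simp
    have i1 : IntervalIntegrable
        (fun x => (Complex.I * c * y)⁻¹ * (Complex.exp ((Complex.I * c * y) * x) * ψj' x))
        volume (-1) 1 :=
      (continuousOn_const.mul
        (((Complex.continuous_exp.comp (by fun_prop)).continuousOn).mul hψint)).intervalIntegrable
    have i2 : IntervalIntegrable
        (fun x => ((Complex.I * c * y)⁻¹ * Complex.exp ((Complex.I * c * y) * (-1))) * ψj' x)
        volume (-1) 1 :=
      (continuousOn_const.mul hψint).intervalIntegrable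
    rw [intervalIntegral.integral_congr e1, intervalIntegral.integral_sub i1 i2,
      intervalIntegral.integral_const_mul, intervalIntegral.integral_const_mul,
      heigj' y hy, hodd0, mul_zero, sub_zero, div_eq_mul_inv]
    ring
  -- assemble
  have hae : ∀ᵐ (y : ℝ), y ≠ 0 := by
    rw [MeasureTheory.ae_iff]
    simp only [not_not, Set.setOf_eq_eq_singleton]
    exact Real.volume_singleton
  calc (∫ x in (-1:ℝ)..1, Φj x * ψj' x)
      = ∫ x in (-1:ℝ)..1, lamj⁻¹ * ((∫ y in (-1:ℝ)..1, H y x * ψj y) * ψj' x) := by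
        apply intervalIntegral.integral_congr
        intro x hx
        rw [Set.uIcc_of_le (by norm_num : (-1:ℝ) ≤ 1)] at hx
        show Φj x * ψj' x = lamj⁻¹ * ((∫ y in (-1:ℝ)..1, H y x * ψj y) * ψj' x)
        rw [hA x hx, mul_assoc]
    _ = lamj⁻¹ * ∫ x in (-1:ℝ)..1, (∫ y in (-1:ℝ)..1, H y x * ψj y) * ψj' x := by
        rw [intervalIntegral.integral_const_mul]
    _ = lamj⁻¹ * ∫ x in (-1:ℝ)..1, ∫ y in (-1:ℝ)..1, H y x * ψj y * ψj' x := by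
        congr 1
        apply intervalIntegral.integral_congr
        intro x _
        exact (intervalIntegral.integral_mul_const _ _).symm
    _ = lamj⁻¹ * ∫ y in (-1:ℝ)..1, ∫ x in (-1:ℝ)..1, H y x * ψj y * ψj' x := by
        congr 1
        apply swap_int (-1) 1 (-1) 1 (by norm_num) (by norm_num)
          (fun x y => H y x * ψj y * ψj' x)
        exact (((hHc.comp (continuous_snd.prodMk continuous_fst)).continuousOn.mul
          (hcj.comp continuous_snd.continuousOn (fun p hp => hp.2))).mul
          (hcj'.comp continuous_fst.continuousOn (fun p hp => hp.1)))
    _ = lamj⁻¹ * ∫ y in (-1:ℝ)..1, ψj y * ∫ x in (-1:ℝ)..1, H y x * ψj' x := by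
        congr 1
        apply intervalIntegral.integral_congr
        intro y _
        simp only
        rw [← intervalIntegral.integral_const_mul]
        apply intervalIntegral.integral_congr
        intro x _
        ring
    _ = lamj⁻¹ * ∫ y in (-1:ℝ)..1, lamj' / (Complex.I * c) * (ψj y * g y) := by
        congr 1
        apply intervalIntegral.integral_congr_ae
        filter_upwards [hae] with y hy0 hy
        rw [Set.uIoc_of_le (by norm_num : (-1:ℝ) ≤ 1)] at hy
        have hy' : y ∈ Set.Icc (-1:ℝ) 1 := Set.Ioc_subset_Icc_self hy
        have hy0' : (y : ℂ) ≠ 0 := by exact_mod_cast hy0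
        rw [hC y hy' hy0, hgy y hy' hy0]
        field_simp
    _ = lamj' / (Complex.I * c * lamj) * ∫ y in (-1:ℝ)..1, ψj y * g y := by
        rw [intervalIntegral.integral_const_mul, ← mul_assoc]
        congr 1
        field_simp
end

section
/- Let r(z) = Π_{k=1}^{M₁} ((z + conj(λ_k)⁻¹)(z + λ_k⁻¹))/((z − λ_k⁻¹)(z − conj(λ_k)⁻¹)) · Π_{k'=1}^{M₂} (z + μ_{k'}⁻¹)/(z − μ_{k'}⁻¹), where λ_k ∈ ℂ \ ℝ and μ_{k'} ∈ ℝ all have positive real part and are nonzero. Then |r(iy)| = 1 for all y ∈ ℝ, and |r(z)| ≤ 1 for all z with Re(z) ≤ 0. -/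
/-!
Each factor of `r` is a Blaschke factor `(z + a) / (z - conj a)` with `0 < re a`. Writing
`z = x + iy` and `a = p + iq`, one has `|z + a|² - |z - conj a|² = 4xp`, so every factor has
modulus `1` on the imaginary axis and at most `1` on the closed left half-plane, and so does
their product.
-/

open Complex ComplexConjugate

noncomputable def blaschkeFactor (a z : ℂ) : ℂ := (z + a) / (z - conj a)

theorem normSq_add_sub_normSq_sub_conj (z a : ℂ) :
    normSq (z + a) - normSq (z - conj a) = 4 * z.re * a.re := by
  simp only [normSq_apply, add_re, add_im, sub_re, sub_im, conj_re, conj_im]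
  ring

theorem norm_add_le_norm_sub_conj {z a : ℂ} (hz : z.re ≤ 0) (ha : 0 ≤ a.re) :
    ‖z + a‖ ≤ ‖z - conj a‖ := by
  rw [norm_def, norm_def]
  apply Real.sqrt_le_sqrt
  nlinarith [normSq_add_sub_normSq_sub_conj z a, mul_nonpos_of_nonpos_of_nonneg hz ha]

theorem norm_add_eq_norm_sub_conj {z : ℂ} (a : ℂ) (hz : z.re = 0) :
    ‖z + a‖ = ‖z - conj a‖ := by
  rw [norm_def, norm_def]
  congr 1
  have h := normSq_add_sub_normSq_sub_conj z a
  rw [hz, mul_zero, zero_mul] at h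
  linarith

theorem sub_conj_ne_zero {z a : ℂ} (hz : z.re ≤ 0) (ha : 0 < a.re) : z - conj a ≠ 0 := by
  intro h
  have := congrArg re h
  simp only [sub_re, conj_re, zero_re] at this
  linarith

/-- The denominator can vanish only if `a.re = 0`, and then the factor is the junk value `0`. -/
theorem norm_blaschkeFactor_le_one {z a : ℂ} (hz : z.re ≤ 0) (ha : 0 ≤ a.re) :
    ‖blaschkeFactor a z‖ ≤ 1 := by
  rw [blaschkeFactor, norm_div]
  exact div_le_one_of_le₀ (norm_add_le_norm_sub_conj hz ha) (norm_nonneg _)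

theorem norm_blaschkeFactor_eq_one {z a : ℂ} (hz : z.re = 0) (ha : 0 < a.re) :
    ‖blaschkeFactor a z‖ = 1 := by
  rw [blaschkeFactor, norm_div, norm_add_eq_norm_sub_conj a hz]
  exact div_self (norm_ne_zero_iff.mpr (sub_conj_ne_zero hz.le ha))

theorem conj_pair_eq_blaschkeFactor_mul (w z : ℂ) :
    (z + conj w) * (z + w) / ((z - w) * (z - conj w)) =
      blaschkeFactor (conj w) z * blaschkeFactor w z := by
  rw [blaschkeFactor, blaschkeFactor, conj_conj, mul_div_mul_comm]

theorem re_inv_pos {w : ℂ} (hw : 0 < w.re) : 0 < w⁻¹.re := by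
  rw [inv_re]
  exact div_pos hw (normSq_pos.mpr (fun h => by simp [h] at hw))

theorem stmt_13_general (M₁ M₂ : ℕ) (lam : Fin M₁ → ℂ) (μ : Fin M₂ → ℝ)
    (hlam_re : ∀ k, 0 < (lam k).re)
    (hμ : ∀ k', 0 < μ k')
    (r : ℂ → ℂ)
    (hr : ∀ z, r z =
      (∏ k, ((z + (starRingEnd ℂ (lam k))⁻¹) * (z + (lam k)⁻¹)) /
        ((z - (lam k)⁻¹) * (z - (starRingEnd ℂ (lam k))⁻¹))) *
      ∏ k', (z + ((μ k' : ℂ))⁻¹) / (z - ((μ k' : ℂ))⁻¹)) :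
    (∀ y : ℝ, ‖r (Complex.I * y)‖ = 1)
    ∧ ∀ z : ℂ, z.re ≤ 0 → ‖r z‖ ≤ 1 := by
  have hfactor : ∀ z, r z =
      (∏ k, blaschkeFactor (conj (lam k)⁻¹) z * blaschkeFactor (lam k)⁻¹ z) *
        ∏ k', blaschkeFactor (μ k' : ℂ)⁻¹ z := by
    intro z
    rw [hr]
    congr 1 <;> refine Finset.prod_congr rfl fun k _ => ?_
    · rw [← map_inv₀, conj_pair_eq_blaschkeFactor_mul]
    · rw [blaschkeFactor, map_inv₀, conj_ofReal]
  have hmem (S : Submonoid ℂ) (z : ℂ) (hS : ∀ a : ℂ, 0 < a.re → blaschkeFactor a z ∈ S) :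
      r z ∈ S := by
    have hlam_inv k : 0 < (lam k)⁻¹.re := re_inv_pos (hlam_re k)
    have hlam_conj_inv k : 0 < (conj (lam k)⁻¹).re := by simpa only [conj_re] using hlam_inv k
    have hμ_inv k' : 0 < ((μ k' : ℂ))⁻¹.re := re_inv_pos (by simpa using hμ k')
    rw [hfactor]
    exact mul_mem (prod_mem fun k _ => mul_mem (hS _ (hlam_conj_inv k)) (hS _ (hlam_inv k)))
      (prod_mem fun k' _ => hS _ (hμ_inv k'))
  refine ⟨fun y => ?_, fun z hz => ?_⟩
  · refine mem_sphere_zero_iff_norm.mp (hmem (Submonoid.unitSphere ℂ) _ fun a ha => ?_)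
    exact mem_sphere_zero_iff_norm.mpr (norm_blaschkeFactor_eq_one (by simp) ha)
  · refine (Submonoid.mem_unitClosedBall ℂ).mp (hmem _ z fun a ha => ?_)
    exact (Submonoid.mem_unitClosedBall ℂ).mpr (norm_blaschkeFactor_le_one hz ha.le)

theorem stmt_13 (M₁ M₂ : ℕ) (lam : Fin M₁ → ℂ) (μ : Fin M₂ → ℝ)
    (hlam_re : ∀ k, 0 < (lam k).re) (hlam_im : ∀ k, (lam k).im ≠ 0)
    (hμ : ∀ k', 0 < μ k')
    (r : ℂ → ℂ)
    (hr : ∀ z, r z =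
      (∏ k, ((z + (starRingEnd ℂ (lam k))⁻¹) * (z + (lam k)⁻¹)) /
        ((z - (lam k)⁻¹) * (z - (starRingEnd ℂ (lam k))⁻¹))) *
      ∏ k', (z + ((μ k' : ℂ))⁻¹) / (z - ((μ k' : ℂ))⁻¹)) :
    (∀ y : ℝ, ‖r (Complex.I * y)‖ = 1)
    ∧ ∀ z : ℂ, z.re ≤ 0 → ‖r z‖ ≤ 1 :=
  stmt_13_general M₁ M₂ lam μ hlam_re hμ r hr
end
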